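/- arXiv:1702.05141 — 3 statements merged into one kernel-verified Lean document; each statement's English description precedes it below -/
import Mathlib

section
/- Let X be a finite set with |X| ≥ 2 and let δ be a dissimilarity map on X. If u and w are ultrametrics on X that are l∞-nearest to δ, and λ,μ ∈ ℝ satisfy max(λ,μ) = 0, then the dissimilarity map {x,y} ↦ max(λ + u{x,y}, μ + w{x,y}) is again an ultrametric that is l∞-nearest to δ. In other words, the set of ultrametrics l∞-nearest to δ is tropically convex. -/
/-- A dissimilarity map on `X`: symmetric with zero diagonal
(equivalently, a real number attached to each 2-element subset of `X`). -/
def IsDissim {X : Type*} (d : X → X → ℝ) : Prop :=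
  (∀ x, d x x = 0) ∧ (∀ x y, d x y = d y x)

/-- An ultrametric: a dissimilarity map such that for all pairwise distinct `x,y,z`,
the maximum of the three pairwise values is attained at least twice. -/
def IsUltra {X : Type*} (d : X → X → ℝ) : Prop :=
  IsDissim d ∧ ∀ x y z : X, x ≠ y → x ≠ z → y ≠ z →
    ((d x y = d x z ∧ d y z ≤ d x y) ∨ (d x y = d y z ∧ d x z ≤ d x y) ∨
      (d x z = d y z ∧ d x y ≤ d x z))

/-- The `l∞`-distance between two dissimilarity maps: the maximum of
`|d₁{x,y} - d₂{x,y}|` over 2-element subsets `{x,y}`. -/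
noncomputable def dinf {X : Type*} (d₁ d₂ : X → X → ℝ) : ℝ :=
  sSup {r | ∃ x y : X, x ≠ y ∧ r = |d₁ x y - d₂ x y|}

/-- `u` is an ultrametric that is `l∞`-nearest to `δ`. -/
def NearestUltra {X : Type*} (δ u : X → X → ℝ) : Prop :=
  IsUltra u ∧ ∀ u', IsUltra u' → dinf δ u ≤ dinf δ u'

/-!
Write `v = max (λ + u) (μ + w)`. The strong triangle inequality `u xy ≤ max (u xz) (u yz)` is
preserved by adding constants and by pointwise maxima, so `v` is an ultrametric; its diagonal
vanishes because `max λ μ = 0`. Since `λ, μ ≤ 0` and one of them is `0`, on each pair `v` lies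
between `min (u, w)` and `max (u, w)`, so `‖δ - v‖∞ ≤ max ‖δ - u‖∞ ‖δ - w‖∞`, which is the common
minimal distance.
-/

lemma eq_and_le_or_of_le_max {a b c : ℝ} (ha : a ≤ max b c) (hb : b ≤ max a c)
    (hc : c ≤ max a b) : (a = b ∧ c ≤ a) ∨ (a = c ∧ b ≤ a) ∨ (b = c ∧ a ≤ b) := by
  simp only [le_max_iff] at ha hb hc
  grind

lemma isUltra_iff_le_max {X : Type*} {d : X → X → ℝ} :
    IsUltra d ↔ IsDissim d ∧
      ∀ x y z : X, x ≠ y → x ≠ z → y ≠ z → d x y ≤ max (d x z) (d y z) := by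
  refine ⟨fun ⟨hd, hmax⟩ => ⟨hd, fun x y z hxy hxz hyz => ?_⟩,
    fun ⟨hd, hle⟩ => ⟨hd, fun x y z hxy hxz hyz => ?_⟩⟩
  · rcases hmax x y z hxy hxz hyz with ⟨h, -⟩ | ⟨h, -⟩ | ⟨-, h⟩
    · exact h.le.trans (le_max_left _ _)
    · exact h.le.trans (le_max_right _ _)
    · exact h.trans (le_max_left _ _)
  · have hxz' := hle x z y hxz hxy hyz.symm
    have hyz' := hle y z x hyz hxy.symm hxz.symm
    rw [hd.2 z y] at hxz'
    rw [hd.2 y x, hd.2 z x] at hyz'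
    exact eq_and_le_or_of_le_max (hle x y z hxy hxz hyz) hxz' hyz'

lemma isUltra_max_add {X : Type*} {u w : X → X → ℝ} (hu : IsUltra u) (hw : IsUltra w)
    {lam mu : ℝ} (hlm : max lam mu = 0) :
    IsUltra fun x y => max (lam + u x y) (mu + w x y) := by
  rw [isUltra_iff_le_max] at hu hw ⊢
  obtain ⟨⟨hu0, husymm⟩, hule⟩ := hu
  obtain ⟨⟨hw0, hwsymm⟩, hwle⟩ := hw
  refine ⟨⟨fun x => by simp [hu0, hw0, hlm], fun x y => by simp only [husymm x y, hwsymm x y]⟩,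
    fun x y z hxy hxz hyz => ?_⟩
  have hu := hule x y z hxy hxz hyz
  have hw := hwle x y z hxy hxz hyz
  simp only [le_max_iff, max_le_iff] at hu hw ⊢
  grind

lemma abs_sub_max_add_le {a b c r lam mu : ℝ} (hb : |a - b| ≤ r) (hc : |a - c| ≤ r)
    (hlm : max lam mu = 0) : |a - max (lam + b) (mu + c)| ≤ r := by
  have hlam : lam ≤ 0 := hlm ▸ le_max_left lam mu
  have hmu : mu ≤ 0 := hlm ▸ le_max_right lam mu
  rw [abs_le] at hb hc ⊢
  constructor
  · linarith [max_le (a := lam + b) (b := mu + c) (c := a + r) (by linarith) (by linarith)]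
  · rcases max_choice lam mu with h | h <;> rw [h] at hlm
    · linarith [le_max_left (lam + b) (mu + c)]
    · linarith [le_max_right (lam + b) (mu + c)]

section Dinf

variable {X : Type*} {d₁ d₂ : X → X → ℝ}

lemma dinf_nonneg : 0 ≤ dinf d₁ d₂ :=
  Real.sSup_nonneg fun _ ⟨_, _, _, hr⟩ => hr ▸ abs_nonneg _

lemma abs_sub_le_dinf [Finite X] {x y : X} (hxy : x ≠ y) : |d₁ x y - d₂ x y| ≤ dinf d₁ d₂ := by
  refine le_csSup ?_ ⟨x, y, hxy, rfl⟩
  refine (Set.finite_range fun p : X × X => |d₁ p.1 p.2 - d₂ p.1 p.2|).subset ?_ |>.bddAbove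
  rintro r ⟨x, y, -, rfl⟩
  exact ⟨(x, y), rfl⟩

lemma dinf_le {r : ℝ} (hr : 0 ≤ r) (h : ∀ x y, x ≠ y → |d₁ x y - d₂ x y| ≤ r) :
    dinf d₁ d₂ ≤ r :=
  Real.sSup_le (fun _ ⟨x, y, hxy, hs⟩ => hs ▸ h x y hxy) hr

lemma dinf_max_add_le [Finite X] (δ u w : X → X → ℝ) {lam mu : ℝ} (hlm : max lam mu = 0) :
    dinf δ (fun x y => max (lam + u x y) (mu + w x y)) ≤ max (dinf δ u) (dinf δ w) :=
  dinf_le (dinf_nonneg.trans (le_max_left _ _)) fun _ _ hxy =>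
    abs_sub_max_add_le ((abs_sub_le_dinf hxy).trans (le_max_left _ _))
      ((abs_sub_le_dinf hxy).trans (le_max_right _ _)) hlm

end Dinf

theorem stmt1_general {X : Type*} [Fintype X]
    (δ : X → X → ℝ) (u w : X → X → ℝ)
    (hu : NearestUltra δ u) (hw : NearestUltra δ w)
    (lam mu : ℝ) (hlm : max lam mu = 0) :
    NearestUltra δ (fun x y => max (lam + u x y) (mu + w x y)) :=
  ⟨isUltra_max_add hu.1 hw.1 hlm, fun u' hu' =>
    (dinf_max_add_le δ u w hlm).trans (max_le (hu.2 u' hu') (hw.2 u' hu'))⟩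

/-- The set of ultrametrics `l∞`-nearest to a dissimilarity map is tropically convex:
it is closed under tropical convex combinations `max(λ + u, μ + w)` with `max(λ,μ) = 0`. -/
theorem stmt1 {X : Type*} [Fintype X] (hcard : 2 ≤ Fintype.card X)
    (δ : X → X → ℝ) (hδ : IsDissim δ) (u w : X → X → ℝ)
    (hu : NearestUltra δ u) (hw : NearestUltra δ w)
    (lam mu : ℝ) (hlm : max lam mu = 0) :
    NearestUltra δ (fun x y => max (lam + u x y) (mu + w x y)) :=
  stmt1_general δ u w hu hw lam mu hlm
end

section
/- Let M be a loopless matroid on a finite nonempty ground set E. Then every M-ultrametric w admits a unique representation w = w^{S,α} with S a nested set of M and α : S → ℝ strictly compatible with S; that is, such a pair (S,α) exists, and if w = w^{S₁,α₁} = w^{S₂,α₂} with α₁, α₂ strictly compatible, then S₁ = S₂ and α₁ = α₂. -/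
variable {α : Type*}

/-- A circuit of `M`: a dependent subset of the ground set all of whose proper
subsets are independent. -/
def MCircuit (M : Matroid α) (C : Set α) : Prop :=
  C ⊆ M.E ∧ ¬ M.Indep C ∧ ∀ D : Set α, D ⊂ C → M.Indep D

/-- A matroid is connected if its ground set is nonempty and any two distinct
elements of the ground set lie in a common circuit. -/
def MConnected (M : Matroid α) : Prop :=
  M.E.Nonempty ∧ ∀ a ∈ M.E, ∀ b ∈ M.E, a ≠ b → ∃ C, MCircuit M C ∧ a ∈ C ∧ b ∈ C

/-- The connected component of `e` in `M`: the equivalence class of `e` under the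
relation "lying in a common circuit". -/
def MComponent (M : Matroid α) (e : α) : Set α :=
  {f ∈ M.E | f = e ∨ ∃ C, MCircuit M C ∧ e ∈ C ∧ f ∈ C}

/-- A nested set of `M`: a collection of nonempty connected flats containing every
connected component of `M`, such that the closure of the union of any ≥ 2 pairwise
incomparable members induces a disconnected restriction. -/
def NestedSet (M : Matroid α) (S : Set (Set α)) : Prop :=
  (∀ F ∈ S, F.Nonempty ∧ M.IsFlat F ∧ MConnected (M.restrict F)) ∧
  (∀ e ∈ M.E, MComponent M e ∈ S) ∧
  (∀ T : Finset (Set α), ↑T ⊆ S → 2 ≤ T.card →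
    (∀ F ∈ T, ∀ G ∈ T, F ≠ G → ¬ F ⊆ G ∧ ¬ G ⊆ F) →
    ¬ MConnected (M.restrict (M.closure (⋃ F ∈ T, F))))

/-- `a : S → ℝ` is compatible with `S`: weakly monotone with respect to inclusion. -/
def Compat (S : Set (Set α)) (a : Set α → ℝ) : Prop :=
  ∀ F ∈ S, ∀ G ∈ S, F ⊆ G → a F ≤ a G

/-- `a : S → ℝ` is strictly compatible with `S`. -/
def StrictCompat (S : Set (Set α)) (a : Set α → ℝ) : Prop :=
  ∀ F ∈ S, ∀ G ∈ S, F ⊂ G → a F < a G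

/-- `F` is the minimal member of `S` containing `e`. -/
def MinMem (S : Set (Set α)) (e : α) (F : Set α) : Prop :=
  F ∈ S ∧ e ∈ F ∧ ∀ G ∈ S, e ∈ G → F ⊆ G

/-- `w` is the vector `w^{S,a}`, i.e. `w e = a (F_e)` where `F_e` is the minimal
member of `S` containing `e`, for every `e` in the ground set. -/
def Represents (M : Matroid α) (S : Set (Set α)) (a : Set α → ℝ) (w : α → ℝ) : Prop :=
  ∀ e ∈ M.E, ∃ F, MinMem S e F ∧ w e = a F

/-- The weight of a set `B` with respect to `w`. -/
noncomputable def bweight (w : α → ℝ) (B : Set α) : ℝ := ∑ᶠ e ∈ B, w e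

/-- `B` is a `w`-minimum basis of `M`. -/
def MinBase (M : Matroid α) (w : α → ℝ) (B : Set α) : Prop :=
  M.IsBase B ∧ ∀ B', M.IsBase B' → bweight w B ≤ bweight w B'

/-- `w` is an `M`-ultrametric: every ground element lies in some `w`-minimum basis. -/
def MUltrametric (M : Matroid α) (w : α → ℝ) : Prop :=
  ∀ e ∈ M.E, ∃ B, MinBase M w B ∧ e ∈ B

/-!
The representing nested set is forced to consist of the connected components of the sublevel
sets `{e | w e ≤ t}`, each labelled by the maximum weight on it. For an ultrametric these
sublevel sets are flats (an element spanned by strictly lighter ones lies in no minimum basis),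
so in a loopless matroid their components are connected flats, and a connected set spanned by
several incomparable components is absorbed by the heaviest of them. Conversely, a connected
flat is never covered by the smaller members of a nested set, so in any representation every
label is attained on its member; this pins the labels to the maximum weights and identifies
the members with the components of sublevel sets.
-/

open Set Matroid

section Components

variable {M N : Matroid α} {C C' C₁ C₂ D G L L' : Set α} {a c e f x : α}

lemma mcircuit_iff_isCircuit : MCircuit M C ↔ M.IsCircuit C := by
  rw [MCircuit, isCircuit_iff_forall_ssubset, Dep]
  exact ⟨fun ⟨hE, hdep, h⟩ ↦ ⟨⟨hdep, hE⟩, fun D hD ↦ h D hD⟩,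
    fun ⟨⟨hdep, hE⟩, h⟩ ↦ ⟨hE, hdep, fun D hD ↦ h hD⟩⟩

lemma mem_mcomponent_iff :
    f ∈ MComponent N e ↔ f ∈ N.E ∧ (f = e ∨ ∃ C, N.IsCircuit C ∧ e ∈ C ∧ f ∈ C) := by
  simp only [MComponent, mem_ofPred_eq, mcircuit_iff_isCircuit]

lemma mconnected_iff : MConnected N ↔ N.E.Nonempty ∧
    ∀ a ∈ N.E, ∀ b ∈ N.E, a ≠ b → ∃ C, N.IsCircuit C ∧ a ∈ C ∧ b ∈ C := by
  simp only [MConnected, mcircuit_iff_isCircuit]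

lemma Matroid.IsCircuit.inter_sdiff_nonempty_of_subset (hC : M.IsCircuit C)
    (hD : M.IsCircuit D) (he : e ∈ C) (hDC : D ⊆ (C ∪ C') \ {e}) : (D ∩ (C' \ C)).Nonempty := by
  by_contra h
  have hDsubC : D ⊆ C := fun x hx ↦ by_contra fun hxC ↦
    h ⟨x, hx, (hDC hx).1.resolve_left hxC, hxC⟩
  exact (hDC (hD.eq_of_subset_isCircuit hC hDsubC ▸ he)).2 rfl

/-- Transitivity of lying in a common circuit (Oxley, *Matroid Theory*, Prop. 4.1.2). -/
lemma Matroid.IsCircuit.exists_isCircuit_mem_mem [M.Finitary] (h₁ : M.IsCircuit C₁)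
    (h₂ : M.IsCircuit C₂) (ha : a ∈ C₁) (hc : c ∈ C₂) (h₁₂ : (C₁ ∩ C₂).Nonempty) :
    ∃ C, M.IsCircuit C ∧ a ∈ C ∧ c ∈ C := by
  induction hn : (C₁ ∪ C₂).ncard using Nat.strong_induction_on generalizing C₁ C₂ with
  | _ n ih =>
  by_contra! hcon
  have hfin : (C₁ ∪ C₂).Finite := h₁.finite.union h₂.finite
  have smaller : ∀ D₁ D₂, M.IsCircuit D₁ → M.IsCircuit D₂ → a ∈ D₁ → c ∈ D₂ →
      (D₁ ∩ D₂).Nonempty → ¬ D₁ ∪ D₂ ⊂ C₁ ∪ C₂ := fun D₁ D₂ hD₁ hD₂ haD hcD hD hss ↦ by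
    obtain ⟨C, hC, haC, hcC⟩ := ih _ (hn ▸ ncard_lt_ncard hss hfin) hD₁ hD₂ haD hcD hD rfl
    exact hcon C hC haC hcC
  obtain ⟨e, he₁, he₂⟩ := h₁₂
  obtain ⟨C₃, hC₃ss, hC₃, haC₃⟩ :=
    h₁.strong_elimination h₂ he₁ he₂ ha fun haC₂ ↦ hcon C₂ h₂ haC₂ hc
  obtain ⟨C₄, hC₄ss, hC₄, hcC₄⟩ :=
    h₂.strong_elimination h₁ he₂ he₁ hc fun hcC₁ ↦ hcon C₁ h₁ ha hcC₁
  rw [union_comm] at hC₄ss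
  obtain ⟨d, hdC₃, hdC₂, hdC₁⟩ := h₁.inter_sdiff_nonempty_of_subset hC₃ he₁ hC₃ss
  obtain ⟨x, hxC₄, hxC₁, -⟩ :=
    h₂.inter_sdiff_nonempty_of_subset hC₄ he₂ (union_comm C₁ C₂ ▸ hC₄ss)
  -- Minimality of `C₁ ∪ C₂` forces `C₂ \ C₁ ⊆ C₄`, so `C₃` and `C₄` meet, at `d`.
  have hdC₄ : d ∈ C₄ := by_contra fun hdC₄ ↦ smaller C₁ C₄ h₁ hC₄ ha hcC₄ ⟨x, hxC₁, hxC₄⟩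
    ⟨union_subset subset_union_left (hC₄ss.trans sdiff_subset), fun h ↦
      (h (mem_union_right _ hdC₂)).elim hdC₁ hdC₄⟩
  refine smaller C₃ C₄ hC₃ hC₄ haC₃ hcC₄ ⟨d, hdC₃, hdC₄⟩
    ⟨union_subset (hC₃ss.trans sdiff_subset) (hC₄ss.trans sdiff_subset), fun h ↦ ?_⟩
  obtain he | he := h (mem_union_left _ he₁)
  exacts [(hC₃ss he).2 rfl, (hC₄ss he).2 rfl]

lemma mcomponent_subset_ground : MComponent N e ⊆ N.E := fun _ hf ↦ hf.1

lemma mem_mcomponent_self (he : e ∈ N.E) : e ∈ MComponent N e := ⟨he, .inl rfl⟩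

lemma Matroid.IsCircuit.subset_mcomponent (hC : N.IsCircuit C) (he : e ∈ C) :
    C ⊆ MComponent N e :=
  fun _ hf ↦ mem_mcomponent_iff.2 ⟨hC.subset_ground hf, .inr ⟨C, hC, he, hf⟩⟩

lemma mem_mcomponent_symm (hf : f ∈ MComponent N e) : e ∈ MComponent N f := by
  obtain ⟨hfE, rfl | ⟨C, hC, heC, hfC⟩⟩ := mem_mcomponent_iff.1 hf
  exacts [mem_mcomponent_self hfE, hC.subset_mcomponent hfC heC]

lemma mcomponent_subset_of_mem [N.Finitary] (hf : f ∈ MComponent N e) :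
    MComponent N f ⊆ MComponent N e := by
  obtain ⟨-, rfl | ⟨C, hC, heC, hfC⟩⟩ := mem_mcomponent_iff.1 hf
  · rfl
  intro g hg
  obtain ⟨hgE, rfl | ⟨D, hD, hfD, hgD⟩⟩ := mem_mcomponent_iff.1 hg
  · exact hf
  obtain ⟨C', hC', heC', hgC'⟩ := hC.exists_isCircuit_mem_mem hD heC hgD ⟨f, hfC, hfD⟩
  exact hC'.subset_mcomponent heC' hgC'

lemma mcomponent_eq_of_mem [N.Finitary] (hf : f ∈ MComponent N e) :
    MComponent N f = MComponent N e :=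
  (mcomponent_subset_of_mem hf).antisymm (mcomponent_subset_of_mem (mem_mcomponent_symm hf))

lemma mconnected_restrict_mcomponent [N.Finitary] (he : e ∈ N.E) :
    MConnected (N ↾ MComponent N e) := by
  refine mconnected_iff.2 ⟨⟨e, mem_mcomponent_self he⟩, fun x hx y hy hxy ↦ ?_⟩
  rw [restrict_ground_eq] at hx hy
  rw [← mcomponent_eq_of_mem hx] at hy ⊢
  obtain ⟨-, rfl | ⟨C, hC, hxC, hyC⟩⟩ := mem_mcomponent_iff.1 hy
  · exact absurd rfl hxy
  exact ⟨C, hC.isCircuit_restrict_of_subset (hC.subset_mcomponent hxC), hxC, hyC⟩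

lemma MConnected.subset_mcomponent (hG : MConnected (N ↾ G)) (hGE : G ⊆ N.E)
    (he : e ∈ G) : G ⊆ MComponent N e := by
  intro f hf
  obtain rfl | hfe := eq_or_ne f e
  · exact mem_mcomponent_self (hGE he)
  obtain ⟨C, hC, heC, hfC⟩ := (mconnected_iff.1 hG).2 e he f hf hfe.symm
  exact ((restrict_isCircuit_iff hGE).1 hC).1.subset_mcomponent heC hfC

lemma mconnected_restrict_mcomponent_restrict [M.Finitary] (he : e ∈ L) :
    MConnected (M ↾ MComponent (M ↾ L) e) := by
  have hKL : MComponent (M ↾ L) e ⊆ L := mcomponent_subset_ground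
  simpa only [restrict_restrict_eq M hKL] using mconnected_restrict_mcomponent (N := M ↾ L) he

lemma MConnected.subset_mcomponent_restrict (hG : MConnected (M ↾ G)) (hGL : G ⊆ L)
    (he : e ∈ G) : G ⊆ MComponent (M ↾ L) e :=
  MConnected.subset_mcomponent (by rwa [restrict_restrict_eq M hGL]) hGL he

lemma mcomponent_restrict_eq_of_subset [M.Finitary] (hL'L : L' ⊆ L)
    (hKL' : MComponent (M ↾ L) e ⊆ L') (hx : x ∈ MComponent (M ↾ L) e) :
    MComponent (M ↾ L') x = MComponent (M ↾ L) e := by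
  rw [← mcomponent_eq_of_mem hx] at hKL' ⊢
  have hxL' : x ∈ L' := hKL' (mem_mcomponent_self hx.1)
  exact (MConnected.subset_mcomponent_restrict (mconnected_restrict_mcomponent_restrict hxL')
      (mcomponent_subset_ground.trans hL'L) (mem_mcomponent_self hxL')).antisymm
    (MConnected.subset_mcomponent_restrict (mconnected_restrict_mcomponent_restrict hx.1) hKL'
      (mem_mcomponent_self hx.1))

lemma Matroid.IsFlat.isFlat_mcomponent_restrict [M.Finitary] [M.Loopless]
    (hL : M.IsFlat L) : M.IsFlat (MComponent (M ↾ L) e) := by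
  set K := MComponent (M ↾ L) e
  have hKL : K ⊆ L := mcomponent_subset_ground
  refine isFlat_iff_closure_eq.2 (Subset.antisymm (fun g hg ↦ by_contra fun hgK ↦ ?_)
    (M.subset_closure K (hKL.trans hL.subset_ground)))
  obtain ⟨C, hCK, hC, hgC⟩ := exists_isCircuit_of_mem_closure hg hgK
  -- `C` is not the loop `{g}`, so it links `g` to some element of `K`.
  obtain ⟨x, hxC, hxg⟩ := (loopless_iff_forall_isCircuit.1 ‹_› C hC).exists_ne g
  have hxK : x ∈ K := (hCK hxC).resolve_left hxg
  have hgL : g ∈ L := hL.closure ▸ M.closure_subset_closure hKL hg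
  have hCL : C ⊆ L := hCK.trans (insert_subset hgL hKL)
  have hgx := (hC.isCircuit_restrict_of_subset hCL).subset_mcomponent hxC hgC
  rw [mcomponent_eq_of_mem hxK] at hgx
  exact hgK hgx

end Components

section Ultrametric

variable {M : Matroid α} {w : α → ℝ} {B F X : Set α} {e f x : α} {s t : ℝ}

lemma bweight_insert_sdiff_singleton (hB : B.Finite) (he : e ∈ B) (hf : f ∉ B) :
    bweight w (insert f (B \ {e})) + w e = bweight w B + w f := by
  have hB' : bweight w B = w e + bweight w (B \ {e}) := by
    rw [bweight, bweight, ← finsum_mem_insert w (show e ∉ B \ {e} from fun h ↦ h.2 rfl)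
      hB.sdiff, insert_sdiff_singleton, insert_eq_of_mem he]
  rw [bweight, finsum_mem_insert _ (fun h ↦ hf h.1) hB.sdiff, ← bweight, hB']
  ring

/-- Otherwise some lighter element could be exchanged for `e` in `B`. -/
lemma MinBase.notMem_closure [M.Finite] (hB : MinBase M w B) (he : e ∈ B) (hX : X ⊆ M.E)
    (hXw : ∀ f ∈ X, w f < w e) : e ∉ M.closure X := by
  intro heX
  obtain ⟨f, hfX, hfcl⟩ : ∃ f ∈ X, f ∉ M.closure (B \ {e}) := by
    by_contra! h
    exact hB.1.indep.notMem_closure_sdiff_of_mem he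
      (M.closure_subset_closure_of_subset_closure h heX)
  have hfB : f ∉ B := fun hfB ↦ hfcl (M.subset_closure _
    (sdiff_subset.trans hB.1.subset_ground) ⟨hfB, fun hfe ↦ (hXw f hfX).ne (congrArg w hfe)⟩)
  have hind : M.Indep (insert f (B \ {e})) :=
    ((hB.1.indep.subset sdiff_subset).insert_indep_iff_of_notMem fun h ↦ hfB h.1).2
      ⟨hX hfX, hfcl⟩
  have hle := hB.2 _ (hB.1.exchange_isBase_of_indep hfB hind)
  have hexch := bweight_insert_sdiff_singleton (w := w) hB.1.finite he hfB
  linarith [hXw f hfX]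

def sublevel (M : Matroid α) (w : α → ℝ) (t : ℝ) : Set α := {e ∈ M.E | w e ≤ t}

lemma sublevel_subset_ground : sublevel M w t ⊆ M.E := sep_subset _ _

lemma sublevel_mono (hst : s ≤ t) : sublevel M w s ⊆ sublevel M w t :=
  fun _ he ↦ ⟨he.1, he.2.trans hst⟩

lemma MUltrametric.isFlat_sublevel [M.Finite] (hw : MUltrametric M w) (t : ℝ) :
    M.IsFlat (sublevel M w t) := by
  refine isFlat_iff_closure_eq.2 (Subset.antisymm (fun g hg ↦ ?_)
    (M.subset_closure _ sublevel_subset_ground))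
  refine ⟨mem_ground_of_mem_closure hg, not_lt.1 fun hgt ↦ ?_⟩
  obtain ⟨B, hB, hgB⟩ := hw g (mem_ground_of_mem_closure hg)
  exact hB.notMem_closure hgB sublevel_subset_ground (fun f hf ↦ hf.2.trans_lt hgt) hg

noncomputable def maxWeight (w : α → ℝ) (F : Set α) : ℝ := sSup (w '' F)

lemma le_maxWeight (hF : F.Finite) (hx : x ∈ F) : w x ≤ maxWeight w F :=
  le_csSup (hF.image w).bddAbove (mem_image_of_mem w hx)

lemma maxWeight_le (hF : F.Nonempty) (h : ∀ x ∈ F, w x ≤ t) : maxWeight w F ≤ t :=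
  csSup_le (hF.image w) (forall_mem_image.2 h)

lemma maxWeight_le_iff_subset_sublevel [M.Finite] (hFE : F ⊆ M.E) (hF : F.Nonempty) :
    maxWeight w F ≤ t ↔ F ⊆ sublevel M w t :=
  ⟨fun h _ hx ↦ ⟨hFE hx, (le_maxWeight (M.ground_finite.subset hFE) hx).trans h⟩,
    fun h ↦ maxWeight_le hF fun _ hx ↦ (h hx).2⟩

def canonicalNestedSet (M : Matroid α) (w : α → ℝ) : Set (Set α) :=
  {K | ∃ t, ∃ e ∈ sublevel M w t, K = MComponent (M ↾ sublevel M w t) e}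

end Ultrametric

section Canonical

variable {M : Matroid α} {w : α → ℝ} {G K : Set α} {e x : α}

lemma nonempty_of_mem_canonicalNestedSet (hK : K ∈ canonicalNestedSet M w) : K.Nonempty := by
  obtain ⟨t, e, he, rfl⟩ := hK
  exact ⟨e, mem_mcomponent_self he⟩

lemma subset_ground_of_mem_canonicalNestedSet (hK : K ∈ canonicalNestedSet M w) : K ⊆ M.E := by
  obtain ⟨t, e, he, rfl⟩ := hK
  exact mcomponent_subset_ground.trans sublevel_subset_ground

lemma subset_sublevel_of_mem_canonicalNestedSet [M.Finite] (hK : K ∈ canonicalNestedSet M w) :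
    K ⊆ sublevel M w (maxWeight w K) :=
  (maxWeight_le_iff_subset_sublevel (subset_ground_of_mem_canonicalNestedSet hK)
    (nonempty_of_mem_canonicalNestedSet hK)).1 le_rfl

lemma mconnected_restrict_of_mem_canonicalNestedSet [M.Finite]
    (hK : K ∈ canonicalNestedSet M w) : MConnected (M ↾ K) := by
  obtain ⟨t, e, he, rfl⟩ := hK
  exact mconnected_restrict_mcomponent_restrict he

lemma MUltrametric.isFlat_of_mem_canonicalNestedSet [M.Finite] [M.Loopless]
    (hw : MUltrametric M w) (hK : K ∈ canonicalNestedSet M w) : M.IsFlat K := by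
  obtain ⟨t, e, he, rfl⟩ := hK
  exact (hw.isFlat_sublevel t).isFlat_mcomponent_restrict

lemma mcomponent_sublevel_maxWeight_eq [M.Finite] (hK : K ∈ canonicalNestedSet M w)
    (hx : x ∈ K) : MComponent (M ↾ sublevel M w (maxWeight w K)) x = K := by
  have hKm := subset_sublevel_of_mem_canonicalNestedSet hK
  obtain ⟨t, e, he, rfl⟩ := hK
  refine mcomponent_restrict_eq_of_subset (sublevel_mono ?_) hKm hx
  exact maxWeight_le ⟨e, mem_mcomponent_self he⟩ fun _ hy ↦ (mcomponent_subset_ground hy).2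

lemma MConnected.subset_of_mem_canonicalNestedSet [M.Finite] (hG : MConnected (M ↾ G))
    (hK : K ∈ canonicalNestedSet M w) (hGK : G ⊆ sublevel M w (maxWeight w K)) (hx : x ∈ G)
    (hxK : x ∈ K) : G ⊆ K :=
  mcomponent_sublevel_maxWeight_eq hK hxK ▸ hG.subset_mcomponent_restrict hGK hx

lemma strictCompat_canonicalNestedSet [M.Finite] :
    StrictCompat (canonicalNestedSet M w) (maxWeight w) := by
  intro K₁ hK₁ K₂ hK₂ hss
  by_contra! h
  obtain ⟨x, hx⟩ := nonempty_of_mem_canonicalNestedSet hK₁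
  have hK₂K₁ : K₂ ⊆ sublevel M w (maxWeight w K₁) :=
    (subset_sublevel_of_mem_canonicalNestedSet hK₂).trans (sublevel_mono h)
  exact hss.not_subset (MConnected.subset_of_mem_canonicalNestedSet
    (mconnected_restrict_of_mem_canonicalNestedSet hK₂) hK₁ hK₂K₁ (hss.subset hx) hx)

lemma represents_canonicalNestedSet [M.Finite] :
    Represents M (canonicalNestedSet M w) (maxWeight w) w := by
  intro e he
  have heL : e ∈ sublevel M w (w e) := ⟨he, le_rfl⟩
  set Ke := MComponent (M ↾ sublevel M w (w e)) e
  have hKe : Ke ∈ canonicalNestedSet M w := ⟨w e, e, heL, rfl⟩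
  have heKe : e ∈ Ke := mem_mcomponent_self heL
  have hKeL : Ke ⊆ sublevel M w (w e) := mcomponent_subset_ground
  refine ⟨Ke, ⟨hKe, heKe, fun G hG heG ↦ ?_⟩, ?_⟩
  · refine MConnected.subset_of_mem_canonicalNestedSet
      (mconnected_restrict_of_mem_canonicalNestedSet hKe) hG (hKeL.trans (sublevel_mono ?_))
      heKe heG
    exact le_maxWeight (M.ground_finite.subset (subset_ground_of_mem_canonicalNestedSet hG)) heG
  · exact le_antisymm
      (le_maxWeight (M.ground_finite.subset (hKeL.trans sublevel_subset_ground)) heKe)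
      (maxWeight_le ⟨e, heKe⟩ fun _ hy ↦ (hKeL hy).2)

lemma mcomponent_mem_canonicalNestedSet [M.Finite] (he : e ∈ M.E) :
    MComponent M e ∈ canonicalNestedSet M w := by
  obtain ⟨t, ht⟩ := (M.ground_finite.image w).bddAbove
  have hL : sublevel M w t = M.E :=
    sublevel_subset_ground.antisymm fun x hx ↦ ⟨hx, ht (mem_image_of_mem w hx)⟩
  exact ⟨t, e, hL ▸ he, by rw [hL, restrict_ground_eq_self]⟩

/-- The closure stays in the sublevel set of the heaviest member `K`; if it were connected
it would lie inside the component `K`, together with the other members. -/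
lemma MUltrametric.not_mconnected_closure_biUnion [M.Finite] (hw : MUltrametric M w)
    (T : Finset (Set α)) (hTS : ↑T ⊆ canonicalNestedSet M w) (hT : 2 ≤ T.card)
    (hinc : ∀ F ∈ T, ∀ G ∈ T, F ≠ G → ¬ F ⊆ G ∧ ¬ G ⊆ F) :
    ¬ MConnected (M ↾ M.closure (⋃ F ∈ T, F)) := by
  intro hconn
  obtain ⟨K, hKT, hKmax⟩ := T.exists_max_image (maxWeight w) (Finset.card_pos.1 (by omega))
  obtain ⟨G, hGT, hGK⟩ := T.exists_mem_ne (by omega) K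
  have hUX : (⋃ F ∈ T, F) ⊆ M.closure (⋃ F ∈ T, F) := M.subset_closure _
    (iUnion₂_subset fun F hF ↦ subset_ground_of_mem_canonicalNestedSet (hTS hF))
  have hXK : M.closure (⋃ F ∈ T, F) ⊆ sublevel M w (maxWeight w K) := by
    rw [← (hw.isFlat_sublevel _).closure]
    exact M.closure_subset_closure (iUnion₂_subset fun F hF ↦
      (subset_sublevel_of_mem_canonicalNestedSet (hTS hF)).trans (sublevel_mono (hKmax F hF)))
  obtain ⟨x, hx⟩ := nonempty_of_mem_canonicalNestedSet (hTS hKT)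
  have hXK' := hconn.subset_of_mem_canonicalNestedSet (hTS hKT) hXK
    (hUX (mem_biUnion hKT hx)) hx
  exact (hinc G hGT K hKT hGK).1 (((subset_biUnion_of_mem hGT).trans hUX).trans hXK')

lemma MUltrametric.nestedSet_canonicalNestedSet [M.Finite] [M.Loopless]
    (hw : MUltrametric M w) : NestedSet M (canonicalNestedSet M w) :=
  ⟨fun _ hK ↦ ⟨nonempty_of_mem_canonicalNestedSet hK, hw.isFlat_of_mem_canonicalNestedSet hK,
      mconnected_restrict_of_mem_canonicalNestedSet hK⟩,
    fun _ he ↦ mcomponent_mem_canonicalNestedSet he, hw.not_mconnected_closure_biUnion⟩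

end Canonical

section Uniqueness

variable {M : Matroid α} {w : α → ℝ} {S : Set (Set α)} {a : Set α → ℝ} {F : Set α}
  {e : α}

lemma NestedSet.subset_ground (hS : NestedSet M S) (hF : F ∈ S) : F ⊆ M.E :=
  (hS.1 F hF).2.1.subset_ground

lemma NestedSet.finite [M.Finite] (hS : NestedSet M S) : S.Finite :=
  M.ground_finite.finite_subsets.subset fun _ ↦ hS.subset_ground

/-- Otherwise the maximal members of `S` strictly inside `F` would be at least two pairwise
incomparable members spanning the connected flat `F`. -/
lemma NestedSet.exists_mem_forall_ssubset_notMem [M.Finite] (hS : NestedSet M S)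
    (hF : M.IsFlat F) (hFc : MConnected (M ↾ F)) : ∃ e ∈ F, ∀ G ∈ S, G ⊂ F → e ∉ G := by
  by_contra! hcov
  set 𝒢 := {G ∈ S | G ⊂ F}
  have h𝒢 : 𝒢.Finite := hS.finite.subset (sep_subset S _)
  have hmax : ∀ e ∈ F, ∃ G, e ∈ G ∧ Maximal (· ∈ 𝒢) G := fun e he ↦ by
    obtain ⟨G, hGS, hGF, heG⟩ := hcov e he
    obtain ⟨H, hGH, hH⟩ := h𝒢.exists_le_maximal (show G ∈ 𝒢 from ⟨hGS, hGF⟩)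
    exact ⟨H, hGH heG, hH⟩
  have hTfin : {G | Maximal (· ∈ 𝒢) G}.Finite := h𝒢.subset fun _ hG ↦ hG.prop
  set T := hTfin.toFinset
  have hTS : ↑T ⊆ S := fun G hG ↦ ((hTfin.mem_toFinset.1 hG).prop).1
  have hUF : ⋃ G ∈ T, G = F := by
    refine (iUnion₂_subset fun G hG ↦ (hTfin.mem_toFinset.1 hG).prop.2.subset).antisymm
      fun e he ↦ ?_
    obtain ⟨G, heG, hG⟩ := hmax e he
    exact mem_biUnion (hTfin.mem_toFinset.2 hG) heG
  have hT : 2 ≤ T.card := by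
    obtain ⟨e, he⟩ := (mconnected_iff.1 hFc).1
    obtain ⟨G₁, heG₁, hG₁⟩ := hmax e he
    obtain ⟨f, hfF, hfG₁⟩ := exists_of_ssubset hG₁.prop.2
    obtain ⟨G₂, hfG₂, hG₂⟩ := hmax f hfF
    exact Finset.one_lt_card.2 ⟨G₁, hTfin.mem_toFinset.2 hG₁, G₂, hTfin.mem_toFinset.2 hG₂,
      fun h ↦ hfG₁ (h ▸ hfG₂)⟩
  have hinc : ∀ G₁ ∈ T, ∀ G₂ ∈ T, G₁ ≠ G₂ → ¬ G₁ ⊆ G₂ ∧ ¬ G₂ ⊆ G₁ := by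
    intro G₁ hG₁ G₂ hG₂ hne
    rw [hTfin.mem_toFinset] at hG₁ hG₂
    exact ⟨fun h ↦ hne (hG₁.eq_of_subset hG₂.prop h),
      fun h ↦ hne (hG₂.eq_of_subset hG₁.prop h).symm⟩
  have hdisc := hS.2.2 T hTS hT hinc
  rw [hUF, hF.closure] at hdisc
  exact hdisc hFc

lemma NestedSet.weight_le (hS : NestedSet M S) (hsc : StrictCompat S a)
    (hrep : Represents M S a w) (hF : F ∈ S) (he : e ∈ F) : w e ≤ a F := by
  obtain ⟨G, ⟨hGS, -, hGF⟩, hwe⟩ := hrep e (hS.subset_ground hF he)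
  obtain rfl | hne := eq_or_ne G F
  · exact hwe.le
  · exact hwe.trans_le (hsc G hGS F hF ((hGF F hF he).ssubset_of_ne hne)).le

lemma NestedSet.maxWeight_eq [M.Finite] (hS : NestedSet M S) (hsc : StrictCompat S a)
    (hrep : Represents M S a w) (hF : F ∈ S) : maxWeight w F = a F := by
  obtain ⟨e, heF, he⟩ := hS.exists_mem_forall_ssubset_notMem (hS.1 F hF).2.1 (hS.1 F hF).2.2
  obtain ⟨G, ⟨hGS, heG, hGmin⟩, hwe⟩ := hrep e (hS.subset_ground hF heF)
  obtain rfl : G = F := by_contra fun hne ↦ he G hGS ((hGmin F hF heF).ssubset_of_ne hne) heG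
  exact le_antisymm (maxWeight_le ⟨e, heF⟩ fun _ hx ↦ hS.weight_le hsc hrep hF hx)
    (hwe ▸ le_maxWeight (M.ground_finite.subset (hS.subset_ground hF)) heF)

lemma NestedSet.canonicalNestedSet_subset [M.Finite] [M.Loopless] (hS : NestedSet M S)
    (hsc : StrictCompat S a) (hrep : Represents M S a w) (hw : MUltrametric M w) :
    canonicalNestedSet M w ⊆ S := by
  intro K hK
  by_contra hKS
  obtain ⟨g, hgK, hg⟩ := hS.exists_mem_forall_ssubset_notMem
    (hw.isFlat_of_mem_canonicalNestedSet hK) (mconnected_restrict_of_mem_canonicalNestedSet hK)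
  obtain ⟨G, ⟨hGS, hgG, -⟩, hwg⟩ := hrep g (subset_ground_of_mem_canonicalNestedSet hK hgK)
  refine hg G hGS (ssubset_of_subset_of_ne ?_ fun h ↦ hKS (h ▸ hGS)) hgG
  refine (hS.1 G hGS).2.2.subset_of_mem_canonicalNestedSet hK (fun x hx ↦ ?_) hgG hgK
  exact ⟨hS.subset_ground hGS hx, (hS.weight_le hsc hrep hGS hx).trans
    (hwg ▸ (subset_sublevel_of_mem_canonicalNestedSet hK hgK).2)⟩

lemma NestedSet.eq_canonicalNestedSet [M.Finite] [M.Loopless] (hS : NestedSet M S)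
    (hsc : StrictCompat S a) (hrep : Represents M S a w) (hw : MUltrametric M w) :
    S = canonicalNestedSet M w := by
  refine Subset.antisymm (fun F hF ↦ ?_) (hS.canonicalNestedSet_subset hsc hrep hw)
  obtain ⟨e, heF⟩ := (hS.1 F hF).1
  have hFL : F ⊆ sublevel M w (a F) :=
    fun x hx ↦ ⟨hS.subset_ground hF hx, hS.weight_le hsc hrep hF hx⟩
  set K := MComponent (M ↾ sublevel M w (a F)) e
  have hK : K ∈ canonicalNestedSet M w := ⟨a F, e, hFL heF, rfl⟩
  have hFK : F ⊆ K := (hS.1 F hF).2.2.subset_mcomponent_restrict hFL heF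
  have hKS : K ∈ S := hS.canonicalNestedSet_subset hsc hrep hw hK
  suffices F = K from this ▸ hK
  by_contra hne
  have hKF : a K ≤ a F := hS.maxWeight_eq hsc hrep hKS ▸
    maxWeight_le ⟨e, hFK heF⟩ fun _ hy ↦ (mcomponent_subset_ground hy).2
  exact (hsc F hF K hKS (hFK.ssubset_of_ne hne)).not_ge hKF

end Uniqueness

theorem stmt7_general (M : Matroid α) (hfin : M.E.Finite)
    (hloop : ∀ e ∈ M.E, M.Indep {e}) (w : α → ℝ) (hw : MUltrametric M w) :
    (∃ (S : Set (Set α)) (a : Set α → ℝ),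
        NestedSet M S ∧ StrictCompat S a ∧ Represents M S a w) ∧
      ∀ (S₁ S₂ : Set (Set α)) (a₁ a₂ : Set α → ℝ),
        NestedSet M S₁ → StrictCompat S₁ a₁ → Represents M S₁ a₁ w →
        NestedSet M S₂ → StrictCompat S₂ a₂ → Represents M S₂ a₂ w →
        S₁ = S₂ ∧ ∀ F ∈ S₁, a₁ F = a₂ F := by
  have : M.Finite := ⟨hfin⟩
  have : M.Loopless := loopless_iff_forall_isNonloop.2 fun e he ↦ indep_singleton.1 (hloop e he)
  refine ⟨⟨canonicalNestedSet M w, maxWeight w, hw.nestedSet_canonicalNestedSet,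
    strictCompat_canonicalNestedSet, represents_canonicalNestedSet⟩, ?_⟩
  intro S₁ S₂ a₁ a₂ hS₁ hsc₁ hrep₁ hS₂ hsc₂ hrep₂
  have hS₁₂ : S₁ = S₂ := (hS₁.eq_canonicalNestedSet hsc₁ hrep₁ hw).trans
    (hS₂.eq_canonicalNestedSet hsc₂ hrep₂ hw).symm
  refine ⟨hS₁₂, fun F hF ↦ ?_⟩
  rw [← hS₁.maxWeight_eq hsc₁ hrep₁ hF, hS₂.maxWeight_eq hsc₂ hrep₂ (hS₁₂ ▸ hF)]

/-- Every `M`-ultrametric on a loopless matroid with finite nonempty ground set has a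
unique representation `w = w^{S,a}` with `S` a nested set and `a` strictly compatible:
such a pair exists, and any two such pairs have the same nested set and the same
weighting on it. -/
theorem stmt7 (M : Matroid α) (hfin : M.E.Finite) (hne : M.E.Nonempty)
    (hloop : ∀ e ∈ M.E, M.Indep {e}) (w : α → ℝ) (hw : MUltrametric M w) :
    (∃ (S : Set (Set α)) (a : Set α → ℝ),
        NestedSet M S ∧ StrictCompat S a ∧ Represents M S a w) ∧
      ∀ (S₁ S₂ : Set (Set α)) (a₁ a₂ : Set α → ℝ),
        NestedSet M S₁ → StrictCompat S₁ a₁ → Represents M S₁ a₁ w →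
        NestedSet M S₂ → StrictCompat S₂ a₂ → Represents M S₂ a₂ w →
        S₁ = S₂ ∧ ∀ F ∈ S₁, a₁ F = a₂ F :=
  stmt7_general M hfin hloop w hw
end

section
/- Let n ≥ 2, let E be a set of 2-element subsets of [n] = {1,…,n}, and let x : E → ℝ. Then there exists an ultrametric u on [n] with u{i,j} = x{i,j} for every {i,j} ∈ E if and only if every edge e ∈ E is contained in some x-minimum maximal acyclic subset of E. -/
/-- `F` is a maximal acyclic subset (spanning forest) of the edge set `E`. -/
def MaxAcyclicIn {n : ℕ} (E F : Finset (Sym2 (Fin n))) : Prop :=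
  F ⊆ E ∧ (SimpleGraph.fromEdgeSet (↑F : Set (Sym2 (Fin n)))).IsAcyclic ∧
    ∀ F', F ⊆ F' → F' ⊆ E → (SimpleGraph.fromEdgeSet (↑F' : Set (Sym2 (Fin n)))).IsAcyclic →
      F' = F

/-! If `x` is the restriction of an ultrametric `u`, then on the path joining `i` and `j` in a
minimum spanning forest some edge has weight at least `u i j = x s(i, j)`, and exchanging that
edge for `s(i, j)` gives a spanning forest that is still minimum. Conversely, an edge `s(i, j)`
of a minimum spanning forest is not bypassed by edges of strictly smaller weight (cut property),
so the subdominant ultrametric, whose value at `i, j` is the least `t` such that `i` and `j` are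
joined by edges of weight at most `t`, agrees with `x` on `E`. -/

namespace SimpleGraph

variable {V : Type*}

theorem reachable_or_of_reachable_sup_edge {H : SimpleGraph V} {a b u v : V}
    (h : (H ⊔ edge a b).Reachable u v) :
    H.Reachable u v ∨ (H.Reachable u a ∧ H.Reachable b v) ∨
      (H.Reachable u b ∧ H.Reachable a v) := by
  obtain ⟨p⟩ := h
  induction p with
  | nil => exact Or.inl .rfl
  | @cons u c w hadj _ ih =>
    rcases hadj with hadj | hadj
    · rcases ih with r | ⟨r₁, r₂⟩ | ⟨r₁, r₂⟩
      · exact Or.inl (hadj.reachable.trans r)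
      · exact Or.inr (Or.inl ⟨hadj.reachable.trans r₁, r₂⟩)
      · exact Or.inr (Or.inr ⟨hadj.reachable.trans r₁, r₂⟩)
    · obtain ⟨rfl, rfl⟩ | ⟨rfl, rfl⟩ := (edge_adj ..).1 hadj |>.1
      · rcases ih with r | ⟨r₁, r₂⟩ | ⟨-, r₂⟩
        · exact Or.inr (Or.inl ⟨.rfl, r⟩)
        · exact Or.inl (r₁.symm.trans r₂)
        · exact Or.inl r₂
      · rcases ih with r | ⟨-, r₂⟩ | ⟨r₁, r₂⟩
        · exact Or.inr (Or.inr ⟨.rfl, r⟩)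
        · exact Or.inl r₂
        · exact Or.inl (r₁.symm.trans r₂)

theorem IsAcyclic.not_reachable_deleteEdges_of_mem_edges {G : SimpleGraph V}
    (hG : G.IsAcyclic) {u v : V} {p : G.Walk u v} (hp : p.IsPath) {e : Sym2 V}
    (he : e ∈ p.edges) : ¬ (G.deleteEdges {e}).Reachable u v := by
  classical
  induction e with | h a b =>
  rw [reachable_deleteEdges_iff_exists_walk]
  rintro ⟨q, hq⟩
  have hpq : (⟨p, hp⟩ : G.Path u v) = q.toPath := (hG.subsingleton_path u v).elim _ _
  exact hq (q.edges_toPath_subset_edges (congrArg Subtype.val hpq ▸ he))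

variable [DecidableEq V]

theorem fromEdgeSet_coe_erase (F : Finset (Sym2 V)) (e : Sym2 V) :
    fromEdgeSet ↑(F.erase e) = (fromEdgeSet ↑F).deleteEdges {e} := by
  rw [Finset.coe_erase, fromEdgeSet_sdiff, deleteEdges]

theorem fromEdgeSet_coe_insert (F : Finset (Sym2 V)) (a b : V) :
    fromEdgeSet ↑(insert s(a, b) F) = fromEdgeSet ↑F ⊔ edge a b := by
  rw [Finset.coe_insert, Set.insert_eq, fromEdgeSet_union, sup_comm, edge]

theorem IsAcyclic.not_reachable_fromEdgeSet_erase {F : Finset (Sym2 V)}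
    (hF : (fromEdgeSet (F : Set (Sym2 V))).IsAcyclic) {a b : V} (hab : s(a, b) ∈ F)
    (hne : a ≠ b) : ¬ (fromEdgeSet ↑(F.erase s(a, b))).Reachable a b := by
  rw [fromEdgeSet_coe_erase]
  exact isAcyclic_iff_forall_adj_isBridge.1 hF ((fromEdgeSet_adj _).2 ⟨hab, hne⟩)

theorem sum_insert_erase_of_not_reachable {F : Finset (Sym2 V)} {e : Sym2 V} (he : e ∈ F)
    {a b : V} (hnr : ¬ (fromEdgeSet ↑(F.erase e)).Reachable a b) (x : Sym2 V → ℝ) :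
    ∑ f ∈ insert s(a, b) (F.erase e), x f = ∑ f ∈ F, x f - x e + x s(a, b) := by
  have hne : a ≠ b := by rintro rfl; exact hnr .rfl
  have hab : s(a, b) ∉ F.erase e := fun h => hnr ((fromEdgeSet_adj _).2 ⟨h, hne⟩).reachable
  rw [Finset.sum_insert hab, Finset.sum_erase_eq_sub he]
  ring

end SimpleGraph

open SimpleGraph

section Ultrametric

variable {X : Type*} {d : X → X → ℝ}

theorem IsUltra.le_max (hd : IsUltra d) {x z : X} (hxz : x ≠ z) (y : X) :
    d x z ≤ max (d x y) (d y z) := by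
  rcases eq_or_ne x y with rfl | hxy
  · exact le_max_right _ _
  rcases eq_or_ne y z with rfl | hyz
  · exact le_max_left _ _
  have := le_max_left (d x y) (d y z)
  have := le_max_right (d x y) (d y z)
  rcases hd.2 x y z hxy hxz hyz with ⟨_, _⟩ | ⟨_, _⟩ | ⟨_, _⟩ <;> linarith

theorem IsUltra.exists_mem_edges_le (hd : IsUltra d) {G : SimpleGraph X} {i j : X}
    (p : G.Walk i j) (hij : i ≠ j) : ∃ a b, s(a, b) ∈ p.edges ∧ d i j ≤ d a b := by
  induction p with
  | nil => exact absurd rfl hij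
  | @cons v c w _ _ ih =>
    rcases eq_or_ne c w with rfl | hcw
    · exact ⟨v, c, by simp, le_rfl⟩
    obtain ⟨a, b, hab, hle⟩ := ih hcw
    rcases le_max_iff.1 (hd.le_max hij c) with h | h
    · exact ⟨v, c, by simp, h⟩
    · exact ⟨a, b, by simp [hab], h.trans hle⟩

theorem isUltra_of_le_max (hd : IsDissim d)
    (h : ∀ x y z, x ≠ y → x ≠ z → y ≠ z → d x z ≤ max (d x y) (d y z)) : IsUltra d := by
  refine ⟨hd, fun x y z hxy hxz hyz => ?_⟩
  have h₁ := h x y z hxy hxz hyz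
  have h₂ := h x z y hxz hxy hyz.symm
  have h₃ := h y x z hxy.symm hyz hxz
  rw [hd.2 z y] at h₂
  rw [hd.2 y x] at h₃
  rw [le_max_iff] at h₁ h₂ h₃
  grind

end Ultrametric

section SpanningForest

variable {n : ℕ} {E F : Finset (Sym2 (Fin n))}

theorem maxAcyclicIn_iff (hEd : ∀ e ∈ E, ¬ e.IsDiag) :
    MaxAcyclicIn E F ↔ F ⊆ E ∧ (fromEdgeSet (F : Set (Sym2 (Fin n)))).IsAcyclic ∧
      ∀ a b, s(a, b) ∈ E → (fromEdgeSet (F : Set (Sym2 (Fin n)))).Reachable a b := by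
  refine ⟨fun ⟨hFE, hF, hmax⟩ => ⟨hFE, hF, fun a b hab => ?_⟩,
    fun ⟨hFE, hF, hreach⟩ => ⟨hFE, hF, fun F' hFF' hF'E hF' => ?_⟩⟩
  · by_contra hnr
    have hins := hmax (insert s(a, b) F) (F.subset_insert _) (Finset.insert_subset hab hFE)
      (by rw [fromEdgeSet_coe_insert]; exact hF.sup_edge_of_not_reachable hnr)
    have hne : a ≠ b := by rintro rfl; exact hnr .rfl
    exact hnr ((fromEdgeSet_adj _).2 ⟨hins ▸ F.mem_insert_self _, hne⟩).reachable
  · refine Finset.Subset.antisymm (fun e he => ?_) hFF'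
    induction e with | h a b =>
    by_contra heF
    have hne : a ≠ b := fun h => hEd _ (hF'E he) (Sym2.mk_isDiag_iff.2 h)
    have hFsub : F ⊆ F'.erase s(a, b) := fun f hf =>
      Finset.mem_erase.2 ⟨fun h => heF (h ▸ hf), hFF' hf⟩
    exact hF'.not_reachable_fromEdgeSet_erase he hne
      ((hreach a b (hF'E he)).mono (fromEdgeSet_mono (Finset.coe_subset.2 hFsub)))

theorem MaxAcyclicIn.exchange (hEd : ∀ e ∈ E, ¬ e.IsDiag) (hF : MaxAcyclicIn E F)
    {e : Sym2 (Fin n)} (he : e ∈ F) {i j : Fin n} (hij : s(i, j) ∈ E)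
    (hnr : ¬ (fromEdgeSet ↑(F.erase e)).Reachable i j) :
    MaxAcyclicIn E (insert s(i, j) (F.erase e)) := by
  obtain ⟨hFE, hFac, hreach⟩ := (maxAcyclicIn_iff hEd).1 hF
  induction e with | h p q =>
  set H := fromEdgeSet (↑(F.erase s(p, q)) : Set (Sym2 (Fin n)))
  have hsplit : fromEdgeSet ↑F = H ⊔ edge p q := by
    rw [← fromEdgeSet_coe_insert, Finset.insert_erase he]
  have hle : H ≤ H ⊔ edge i j := le_sup_left
  have hne : i ≠ j := by rintro rfl; exact hnr .rfl
  have hij' : (H ⊔ edge i j).Reachable i j := Adj.reachable (Or.inr (by simp [edge_adj, hne]))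
  have hpq : (H ⊔ edge i j).Reachable p q := by
    rcases reachable_or_of_reachable_sup_edge (hsplit ▸ hreach i j hij) with
      h | ⟨h₁, h₂⟩ | ⟨h₁, h₂⟩
    · exact absurd h hnr
    · exact (h₁.mono hle).symm.trans (hij'.trans (h₂.mono hle).symm)
    · exact (h₂.mono hle).trans (hij'.symm.trans (h₁.mono hle))
  rw [maxAcyclicIn_iff hEd, fromEdgeSet_coe_insert]
  refine ⟨Finset.insert_subset hij ((F.erase_subset _).trans hFE),
    (hFac.anti (hsplit ▸ le_sup_left)).sup_edge_of_not_reachable hnr, fun a b hab => ?_⟩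
  rcases reachable_or_of_reachable_sup_edge (hsplit ▸ hreach a b hab) with
    h | ⟨h₁, h₂⟩ | ⟨h₁, h₂⟩
  · exact h.mono hle
  · exact (h₁.mono hle).trans (hpq.trans (h₂.mono hle))
  · exact (h₁.mono hle).trans (hpq.symm.trans (h₂.mono hle))

theorem exists_maxAcyclicIn (E : Finset (Sym2 (Fin n))) : ∃ F, MaxAcyclicIn E F := by
  classical
  obtain ⟨F, hF⟩ := (E.powerset.filter fun F : Finset (Sym2 (Fin n)) =>
    (fromEdgeSet (F : Set (Sym2 (Fin n)))).IsAcyclic).exists_maximal ⟨∅, by simp⟩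
  have hmem := hF.prop
  rw [Finset.mem_filter, Finset.mem_powerset] at hmem
  exact ⟨F, hmem.1, hmem.2, fun F' hFF' hF'E hF' =>
    (hF.eq_of_le (by simp [hF'E, hF']) hFF').symm⟩

def IsMinMaxAcyclicIn (E : Finset (Sym2 (Fin n))) (x : Sym2 (Fin n) → ℝ)
    (F : Finset (Sym2 (Fin n))) : Prop :=
  MaxAcyclicIn E F ∧ ∀ F', MaxAcyclicIn E F' → ∑ f ∈ F, x f ≤ ∑ f ∈ F', x f

theorem exists_isMinMaxAcyclicIn (E : Finset (Sym2 (Fin n))) (x : Sym2 (Fin n) → ℝ) :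
    ∃ F, IsMinMaxAcyclicIn E x F := by
  classical
  obtain ⟨F₀, hF₀⟩ := exists_maxAcyclicIn E
  obtain ⟨F, hF, hmin⟩ := (E.powerset.filter (MaxAcyclicIn E)).exists_min_image
    (fun F => ∑ f ∈ F, x f) ⟨F₀, by simp [hF₀.1, hF₀]⟩
  rw [Finset.mem_filter] at hF
  exact ⟨F, hF.2, fun F' hF' => hmin F' (by simp [hF'.1, hF'])⟩

theorem IsMinMaxAcyclicIn.not_reachable_of_lt (hEd : ∀ e ∈ E, ¬ e.IsDiag)
    {x : Sym2 (Fin n) → ℝ} (hF : IsMinMaxAcyclicIn E x F) {i j : Fin n} (he : s(i, j) ∈ F) :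
    ¬ (fromEdgeSet ↑(E.filter (x · < x s(i, j)))).Reachable i j := by
  rintro ⟨p⟩
  obtain ⟨hFE, hFac, -⟩ := (maxAcyclicIn_iff hEd).1 hF.1
  have hnr := hFac.not_reachable_fromEdgeSet_erase he
    fun h => hEd _ (hFE he) (Sym2.mk_isDiag_iff.2 h)
  obtain ⟨d, -, hd₁, hd₂⟩ := p.exists_boundary_dart
    {v | (fromEdgeSet (↑(F.erase s(i, j)) : Set (Sym2 (Fin n)))).Reachable i v} .rfl hnr
  obtain ⟨hdE, -⟩ := (fromEdgeSet_adj _).1 d.adj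
  rw [Finset.mem_coe, Finset.mem_filter] at hdE
  have hnr' : ¬ (fromEdgeSet ↑(F.erase s(i, j))).Reachable d.fst d.snd :=
    fun h => hd₂ (Reachable.trans hd₁ h)
  have := hF.2 _ (hF.1.exchange hEd he hdE.1 hnr')
  rw [sum_insert_erase_of_not_reachable he hnr'] at this
  linarith [hdE.2]

theorem exists_isMinMaxAcyclicIn_mem_of_isUltra (hEd : ∀ e ∈ E, ¬ e.IsDiag)
    {x : Sym2 (Fin n) → ℝ} {u : Fin n → Fin n → ℝ} (hu : IsUltra u)
    (hux : ∀ i j, i ≠ j → s(i, j) ∈ E → u i j = x s(i, j)) {i j : Fin n} (he : s(i, j) ∈ E) :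
    ∃ F, IsMinMaxAcyclicIn E x F ∧ s(i, j) ∈ F := by
  obtain ⟨F, hF⟩ := exists_isMinMaxAcyclicIn E x
  by_cases heF : s(i, j) ∈ F
  · exact ⟨F, hF, heF⟩
  obtain ⟨hFE, hFac, hreach⟩ := (maxAcyclicIn_iff hEd).1 hF.1
  have hij : i ≠ j := fun h => hEd _ he (Sym2.mk_isDiag_iff.2 h)
  obtain ⟨p, hp⟩ := (hreach i j he).exists_isPath
  obtain ⟨a, b, hab, hle⟩ := hu.exists_mem_edges_le p hij
  have habF : s(a, b) ∈ F := (by simpa using p.edges_subset_edgeSet hab : _ ∧ _).1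
  have hnr : ¬ (fromEdgeSet ↑(F.erase s(a, b))).Reachable i j := by
    rw [fromEdgeSet_coe_erase]
    exact hFac.not_reachable_deleteEdges_of_mem_edges hp hab
  refine ⟨_, ⟨hF.1.exchange hEd habF he hnr, fun F' hF' => ?_⟩, Finset.mem_insert_self _ _⟩
  rw [sum_insert_erase_of_not_reachable habF hnr]
  rw [hux a b (p.adj_of_mem_edges hab).ne (hFE habF), hux i j hij he] at hle
  linarith [hF.2 F' hF']

end SpanningForest

section Subdominant

variable {V : Type*} (E : Finset (Sym2 V)) (x : Sym2 V → ℝ)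

-- `∑ e ∈ E, |x e|` bounds every weight; it serves as the level of pairs not joined in `E`.
open Classical in
noncomputable def subdominantLevels (i j : V) : Finset ℝ :=
  insert (∑ e ∈ E, |x e|)
    ((E.image x).filter fun t => (fromEdgeSet ↑(E.filter (x · ≤ t))).Reachable i j)

open Classical in
noncomputable def subdominant (i j : V) : ℝ :=
  if i = j then 0 else (subdominantLevels E x i j).min' (Finset.insert_nonempty _ _)

variable {E x}

theorem mem_subdominantLevels {i j : V} {t : ℝ} :
    t ∈ subdominantLevels E x i j ↔ t = ∑ e ∈ E, |x e| ∨
      t ∈ E.image x ∧ (fromEdgeSet ↑(E.filter (x · ≤ t))).Reachable i j := by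
  simp only [subdominantLevels, Finset.mem_insert, Finset.mem_filter]

theorem subdominantLevels_comm (i j : V) :
    subdominantLevels E x i j = subdominantLevels E x j i := by
  ext
  simp only [mem_subdominantLevels, reachable_comm]

theorem exists_mem_subdominantLevels_le_max {p q r : V} {t₁ t₂ : ℝ}
    (h₁ : t₁ ∈ subdominantLevels E x p q) (h₂ : t₂ ∈ subdominantLevels E x q r) :
    ∃ t ∈ subdominantLevels E x p r, t ≤ max t₁ t₂ := by
  rw [mem_subdominantLevels] at h₁ h₂
  rcases h₁ with rfl | ⟨h₁x, h₁r⟩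
  · exact ⟨_, Finset.mem_insert_self _ _, le_max_left _ _⟩
  rcases h₂ with rfl | ⟨h₂x, h₂r⟩
  · exact ⟨_, Finset.mem_insert_self _ _, le_max_right _ _⟩
  have mono : ∀ {s t : ℝ}, s ≤ t →
      fromEdgeSet (↑(E.filter (x · ≤ s)) : Set (Sym2 V)) ≤ fromEdgeSet ↑(E.filter (x · ≤ t)) :=
    fun hst => fromEdgeSet_mono fun f hf => by simp at hf ⊢; exact ⟨hf.1, hf.2.trans hst⟩
  refine ⟨max t₁ t₂, mem_subdominantLevels.2 (Or.inr ⟨?_, ?_⟩), le_rfl⟩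
  · rcases max_choice t₁ t₂ with h | h <;> rw [h] <;> assumption
  · exact (h₁r.mono (mono (le_max_left _ _))).trans (h₂r.mono (mono (le_max_right _ _)))

theorem subdominant_le_max {p q r : V} (hpq : p ≠ q) (hpr : p ≠ r) (hqr : q ≠ r) :
    subdominant E x p r ≤ max (subdominant E x p q) (subdominant E x q r) := by
  simp only [subdominant, if_neg hpq, if_neg hpr, if_neg hqr]
  obtain ⟨t, ht, hle⟩ :=
    exists_mem_subdominantLevels_le_max (Finset.min'_mem _ _) (Finset.min'_mem _ _)
  exact (Finset.min'_le _ _ ht).trans hle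

theorem subdominant_comm (i j : V) : subdominant E x i j = subdominant E x j i := by
  by_cases h : i = j
  · rw [h]
  simp only [subdominant, if_neg h, if_neg (Ne.symm h)]
  congr 1
  exact subdominantLevels_comm i j

theorem isUltra_subdominant : IsUltra (subdominant E x) :=
  isUltra_of_le_max ⟨fun _ => if_pos rfl, subdominant_comm⟩ fun _ _ _ => subdominant_le_max

theorem subdominant_eq {i j : V} (hij : i ≠ j) (he : s(i, j) ∈ E)
    (h : ¬ (fromEdgeSet ↑(E.filter (x · < x s(i, j)))).Reachable i j) :
    subdominant E x i j = x s(i, j) := by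
  rw [subdominant, if_neg hij]
  refine le_antisymm (Finset.min'_le _ _ ?_) (Finset.le_min' _ _ _ fun t ht => ?_)
  · exact mem_subdominantLevels.2 (Or.inr ⟨Finset.mem_image_of_mem x he,
      ((fromEdgeSet_adj _).2 ⟨by simp [he], hij⟩).reachable⟩)
  rcases mem_subdominantLevels.1 ht with rfl | ⟨-, hr⟩
  · exact (le_abs_self _).trans (Finset.single_le_sum (fun e _ => abs_nonneg (x e)) he)
  by_contra! hlt
  exact h (hr.mono (fromEdgeSet_mono fun f hf => by
    simp at hf ⊢; exact ⟨hf.1, hf.2.trans_lt hlt⟩))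

end Subdominant

theorem stmt18_general (n : ℕ) (E : Finset (Sym2 (Fin n)))
    (hEd : ∀ e ∈ E, ¬ e.IsDiag) (x : Sym2 (Fin n) → ℝ) :
    (∃ u : Fin n → Fin n → ℝ, IsUltra u ∧
        ∀ i j : Fin n, i ≠ j → s(i, j) ∈ E → u i j = x s(i, j)) ↔
      ∀ e ∈ E, ∃ F : Finset (Sym2 (Fin n)), MaxAcyclicIn E F ∧
        (∀ F' : Finset (Sym2 (Fin n)), MaxAcyclicIn E F' →
          ∑ f ∈ F, x f ≤ ∑ f ∈ F', x f) ∧ e ∈ F := by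
  constructor
  · rintro ⟨u, hu, hux⟩ ⟨i, j⟩ he
    obtain ⟨F, ⟨hF, hmin⟩, heF⟩ := exists_isMinMaxAcyclicIn_mem_of_isUltra hEd hu hux he
    exact ⟨F, hF, hmin, heF⟩
  · intro h
    refine ⟨subdominant E x, isUltra_subdominant, fun i j hij he => ?_⟩
    obtain ⟨F, hF, hmin, heF⟩ := h _ he
    exact subdominant_eq hij he (IsMinMaxAcyclicIn.not_reachable_of_lt hEd ⟨hF, hmin⟩ heF)

/-- A partial dissimilarity map `x` on an edge set `E` over `[n]` extends to an
ultrametric on `[n]` if and only if every edge of `E` lies in some `x`-minimum maximal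
acyclic subset of `E` (i.e. `x` is an `M(G)`-ultrametric). -/
theorem stmt18 (n : ℕ) (hn : 2 ≤ n) (E : Finset (Sym2 (Fin n)))
    (hEd : ∀ e ∈ E, ¬ e.IsDiag) (x : Sym2 (Fin n) → ℝ) :
    (∃ u : Fin n → Fin n → ℝ, IsUltra u ∧
        ∀ i j : Fin n, i ≠ j → s(i, j) ∈ E → u i j = x s(i, j)) ↔
      ∀ e ∈ E, ∃ F : Finset (Sym2 (Fin n)), MaxAcyclicIn E F ∧
        (∀ F' : Finset (Sym2 (Fin n)), MaxAcyclicIn E F' →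
          ∑ f ∈ F, x f ≤ ∑ f ∈ F', x f) ∧ e ∈ F :=
  stmt18_general n E hEd x
end
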